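/- arXiv:1007.0744 — 5 statements merged into one kernel-verified Lean document; each statement's English description precedes it below -/
import Mathlib

section
/- The point T = (2, 8a+2) on the elliptic curve E_24(a): y^2 = x^3 + (4a-1)x^2 + 16a x + (64a^2 - 16a) over the function field ℚ(a) has order exactly 4. -/
open WeierstrassCurve

/-- The curve `E_24(a) : y² = x³ + (4a-1)x² + 16a·x + (64a² - 16a)` over `ℚ(a)`. -/
noncomputable def E24 : WeierstrassCurve.Affine (RatFunc ℚ) :=
  { a₁ := 0, a₃ := 0, a₂ := 4 * RatFunc.X - 1, a₄ := 16 * RatFunc.X,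
    a₆ := 64 * RatFunc.X ^ 2 - 16 * RatFunc.X }

lemma h16 : (16 * RatFunc.X + 4 : RatFunc ℚ) ≠ 0 := by
  have h : (16 * RatFunc.X + 4 : RatFunc ℚ)
      = algebraMap (Polynomial ℚ) _ (16 * Polynomial.X + 4) := by
    simp [map_add, map_mul, map_ofNat, RatFunc.algebraMap_X]
  rw [h]
  apply RatFunc.algebraMap_ne_zero
  intro h'
  have := congrArg (fun p => Polynomial.coeff p 1) h'
  simp at this

lemma hy_ne : (8 * RatFunc.X + 2 : RatFunc ℚ) ≠ E24.negY 2 (8 * RatFunc.X + 2) := by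
  simp only [Affine.negY, E24]
  intro h
  apply h16
  linear_combination h

lemma hT : E24.Nonsingular 2 (8 * RatFunc.X + 2) := by
  rw [Affine.nonsingular_iff, Affine.equation_iff]
  refine ⟨by simp only [E24]; ring, Or.inr hy_ne⟩

open Classical in
lemma hslope : E24.slope 2 2 (8 * RatFunc.X + 2) (8 * RatFunc.X + 2) = 2 := by
  rw [Affine.slope_of_Y_ne rfl hy_ne]
  simp only [E24, Affine.negY]
  rw [div_eq_iff (by intro h; exact h16 (by linear_combination h))]
  ring

open Classical in
/-- The point `T = (2, 8a+2)` on `E_24(a)` over `ℚ(a)` has order exactly 4. -/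
theorem stmt_3 :
    ∃ h : E24.Nonsingular 2 (8 * RatFunc.X + 2),
      addOrderOf (WeierstrassCurve.Affine.Point.some _ _ h) = 4 := by
  refine ⟨hT, ?_⟩
  have hxy : (2 : RatFunc ℚ) = 2 → (8 * RatFunc.X + 2 : RatFunc ℚ) ≠ E24.negY 2 (8 * RatFunc.X + 2) :=
    fun _ => hy_ne
  have h2 := Affine.nonsingular_add hT hT (fun h => hxy h.1 h.2)
  have hX : E24.addX 2 2 (E24.slope 2 2 (8 * RatFunc.X + 2) (8 * RatFunc.X + 2))
      = 1 - 4 * RatFunc.X := by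
    rw [hslope]; simp only [Affine.addX, E24]; ring
  have hY : E24.addY 2 2 (8 * RatFunc.X + 2) (E24.slope 2 2 (8 * RatFunc.X + 2) (8 * RatFunc.X + 2))
      = 0 := by
    rw [hslope]
    simp only [Affine.addY, Affine.negAddY, Affine.negY, Affine.addX, E24]
    ring
  rw [hX, hY] at h2
  have hdouble : Affine.Point.some _ _ hT + Affine.Point.some _ _ hT = Affine.Point.some _ _ h2 := by
    rw [Affine.Point.add_some (fun h => hxy h.1 h.2)]
    congr 1
  have hzero : Affine.Point.some _ _ h2 + Affine.Point.some _ _ h2 = 0 := by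
    apply Affine.Point.add_of_Y_eq rfl
    simp [Affine.negY, E24]
  have h4 : (2 : ℕ) ^ 2 • Affine.Point.some _ _ hT = 0 := by
    have : ((2:ℕ)^2) • Affine.Point.some _ _ hT
        = (Affine.Point.some _ _ hT + Affine.Point.some _ _ hT) + (Affine.Point.some _ _ hT + Affine.Point.some _ _ hT) := by
      rw [show ((2:ℕ)^2) = 4 from rfl]
      abel
    rw [this, hdouble, hzero]
  have h2ne : ¬ (2 : ℕ) ^ 1 • Affine.Point.some _ _ hT = 0 := by
    rw [pow_one, two_smul, hdouble]
    exact Affine.Point.some_ne_zero h2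
  have := addOrderOf_eq_prime_pow (p := 2) (n := 1) h2ne h4
  simpa using this
end

section
/- For every t ∈ ℚ with t ∉ {0, 1, -1}, letting a = t^2(t^2-2)/4, the point P = (2t(t^2+t-1), 2(t-1)t(t+1)^3) lies on the elliptic curve E_24(a): y^2 = x^3 + (4a-1)x^2 + 16a x + 64a^2 - 16a, and its double [2]P equals (2, 2(4a+1)). -/
open WeierstrassCurve WeierstrassCurve.Affine

/-- The specialization `E_24(a)` for `a : ℚ`. -/
def E24spec (a : ℚ) : WeierstrassCurve.Affine ℚ :=
  { a₁ := 0, a₃ := 0, a₂ := 4 * a - 1, a₄ := 16 * a, a₆ := 64 * a ^ 2 - 16 * a }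

lemma some_eq_some {W : WeierstrassCurve.Affine ℚ} {x₁ y₁ x₂ y₂ : ℚ}
    (h₁ : W.Nonsingular x₁ y₁) (h₂ : W.Nonsingular x₂ y₂) (hx : x₁ = x₂) (hy : y₁ = y₂) :
    Point.some _ _ h₁ = Point.some _ _ h₂ := by
  subst hx; subst hy; rfl

/-- For `t ∈ ℚ \ {0, ±1}` and `a = t²(t²-2)/4`, the point
`P = (2t(t²+t-1), 2(t-1)t(t+1)³)` lies on `E_24(a)` and `[2]P = (2, 2(4a+1))`. -/
theorem stmt_7 (t : ℚ) (ht0 : t ≠ 0) (ht1 : t ≠ 1) (ht2 : t ≠ -1) :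
    (E24spec (t ^ 2 * (t ^ 2 - 2) / 4)).Equation
      (2 * t * (t ^ 2 + t - 1)) (2 * (t - 1) * t * (t + 1) ^ 3) ∧
    ∃ (h : (E24spec (t ^ 2 * (t ^ 2 - 2) / 4)).Nonsingular
        (2 * t * (t ^ 2 + t - 1)) (2 * (t - 1) * t * (t + 1) ^ 3))
      (h' : (E24spec (t ^ 2 * (t ^ 2 - 2) / 4)).Nonsingular 2
        (2 * (4 * (t ^ 2 * (t ^ 2 - 2) / 4) + 1))),
      2 • Point.some _ _ h = Point.some _ _ h' := by
  set W := E24spec (t ^ 2 * (t ^ 2 - 2) / 4) with hW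
  have ht1' : t - 1 ≠ 0 := sub_ne_zero.mpr ht1
  have ht2' : t + 1 ≠ 0 := by intro h; apply ht2; linarith
  have hy0 : 2 * (t - 1) * t * (t + 1) ^ 3 ≠ 0 := by positivity
  have heq : W.Equation (2 * t * (t ^ 2 + t - 1)) (2 * (t - 1) * t * (t + 1) ^ 3) := by
    rw [equation_iff]
    show _ = _
    simp only [hW, E24spec]
    ring
  have hns : W.Nonsingular (2 * t * (t ^ 2 + t - 1)) (2 * (t - 1) * t * (t + 1) ^ 3) := by
    rw [nonsingular_iff]
    refine ⟨heq, Or.inr ?_⟩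
    simp only [hW, E24spec]
    intro h
    apply hy0
    linarith
  have heq' : W.Equation 2 (2 * (4 * (t ^ 2 * (t ^ 2 - 2) / 4) + 1)) := by
    rw [equation_iff]
    simp only [hW, E24spec]
    ring
  have hy0' : (2 : ℚ) * (4 * (t ^ 2 * (t ^ 2 - 2) / 4) + 1) ≠ 0 := by
    have : 2 * (4 * (t ^ 2 * (t ^ 2 - 2) / 4) + 1) = 2 * ((t - 1) * (t + 1)) ^ 2 := by ring
    rw [this]
    positivity
  have hns' : W.Nonsingular 2 (2 * (4 * (t ^ 2 * (t ^ 2 - 2) / 4) + 1)) := by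
    rw [nonsingular_iff]
    refine ⟨heq', Or.inr ?_⟩
    simp only [hW, E24spec]
    intro h
    apply hy0'
    linarith
  refine ⟨heq, hns, hns', ?_⟩
  have hne : 2 * (t - 1) * t * (t + 1) ^ 3 ≠
      W.negY (2 * t * (t ^ 2 + t - 1)) (2 * (t - 1) * t * (t + 1) ^ 3) := by
    simp only [negY, hW, E24spec]
    intro h
    apply hy0
    linarith
  rw [two_smul, Point.add_self_of_Y_ne hne]
  have hslope : W.slope (2 * t * (t ^ 2 + t - 1)) (2 * t * (t ^ 2 + t - 1))
      (2 * (t - 1) * t * (t + 1) ^ 3) (2 * (t - 1) * t * (t + 1) ^ 3) = t ^ 2 + 2 * t - 1 := by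
    rw [slope_of_Y_ne rfl hne]
    simp only [negY, hW, E24spec]
    rw [div_eq_iff (by intro h; apply hy0; linarith)]
    ring
  refine some_eq_some _ _ ?_ ?_
  · rw [addX, hslope]
    simp only [hW, E24spec]
    ring
  · rw [addY, negAddY, addX, hslope]
    simp only [negY, hW, E24spec]
    ring
end

section
/- For every t ∈ ℚ with t ∉ {0, 1, -1}, the point P = (2t(t^2+t-1), 2(t-1)t(t+1)^3) on the elliptic curve E_24(t^2(t^2-2)/4) has order exactly 8 in the group of rational points. -/
open WeierstrassCurve WeierstrassCurve.Affine

private lemma some_congr {F : Type*} [Field F] {W : WeierstrassCurve.Affine F}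
    {x y x' y' : F} (hx : x = x') (hy : y = y')
    (h : W.Nonsingular x y) (h' : W.Nonsingular x' y') :
    Point.some _ _ h = Point.some _ _ h' := by
  subst hx; subst hy; rfl

/-- For `t ∈ ℚ \ {0, ±1}`, the point `P = (2t(t²+t-1), 2(t-1)t(t+1)³)` on
`E_24(t²(t²-2)/4)` has order exactly 8. -/
theorem stmt_8 (t : ℚ) (ht0 : t ≠ 0) (ht1 : t ≠ 1) (ht2 : t ≠ -1) :
    ∃ h : (E24spec (t ^ 2 * (t ^ 2 - 2) / 4)).Nonsingular
        (2 * t * (t ^ 2 + t - 1)) (2 * (t - 1) * t * (t + 1) ^ 3),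
      addOrderOf (Point.some _ _ h) = 8 := by
  set W : WeierstrassCurve.Affine ℚ := E24spec (t ^ 2 * (t ^ 2 - 2) / 4) with hW
  have htm : t - 1 ≠ 0 := sub_ne_zero.mpr ht1
  have htp : t + 1 ≠ 0 := fun h => ht2 (by linarith)
  have hy1ne : (2 * (t - 1) * t * (t + 1) ^ 3 : ℚ) ≠ 0 := by positivity
  have h1 : W.Nonsingular (2 * t * (t ^ 2 + t - 1)) (2 * (t - 1) * t * (t + 1) ^ 3) := by
    rw [nonsingular_iff, equation_iff]
    constructor
    · simp only [hW, E24spec]; ring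
    · right
      simp only [hW, E24spec]
      intro h
      apply hy1ne
      linarith
  have hy1 : (2 * (t - 1) * t * (t + 1) ^ 3 : ℚ) ≠
      W.negY (2 * t * (t ^ 2 + t - 1)) (2 * (t - 1) * t * (t + 1) ^ 3) := by
    simp only [negY, hW, E24spec]
    intro h
    apply hy1ne
    linarith
  -- the slope denominator at P
  have hden1 : (2 * (2 * (t - 1) * t * (t + 1) ^ 3) + W.a₁ * (2 * t * (t ^ 2 + t - 1)) + W.a₃ : ℚ)
      ≠ 0 := by
    simp only [hW, E24spec]
    intro h; apply hy1ne; linarith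
  have hslope1 : W.slope (2 * t * (t ^ 2 + t - 1)) (2 * t * (t ^ 2 + t - 1))
      (2 * (t - 1) * t * (t + 1) ^ 3) (2 * (t - 1) * t * (t + 1) ^ 3) =
      t ^ 2 + 2 * t - 1 := by
    rw [slope_of_Y_ne rfl hy1]
    simp only [negY, hW, E24spec]
    rw [div_eq_iff (by intro h; apply hy1ne; linarith)]
    ring
  have hx2 : W.addX (2 * t * (t ^ 2 + t - 1)) (2 * t * (t ^ 2 + t - 1)) (t ^ 2 + 2 * t - 1)
      = 2 := by
    simp only [addX, hW, E24spec]; ring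
  have hy2 : W.addY (2 * t * (t ^ 2 + t - 1)) (2 * t * (t ^ 2 + t - 1))
      (2 * (t - 1) * t * (t + 1) ^ 3) (t ^ 2 + 2 * t - 1) = 2 * (t ^ 2 - 1) ^ 2 := by
    simp only [addY, negAddY, negY, addX, hW, E24spec]; ring
  have h2 : W.Nonsingular 2 (2 * (t ^ 2 - 1) ^ 2) := by
    have := nonsingular_add h1 h1 fun hxy => hy1 hxy.right
    rwa [hslope1, hx2, hy2] at this
  have hQ2 : Point.some _ _ h1 + Point.some _ _ h1 = Point.some _ _ h2 := by
    rw [Point.add_self_of_Y_ne hy1]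
    exact some_congr (by rw [hslope1, hx2]) (by rw [hslope1, hy2]) _ _
  -- second doubling
  have hy2ne : (2 * (t ^ 2 - 1) ^ 2 : ℚ) ≠ 0 := by
    have : t ^ 2 - 1 = (t - 1) * (t + 1) := by ring
    rw [this]; positivity
  have hy2' : (2 * (t ^ 2 - 1) ^ 2 : ℚ) ≠ W.negY 2 (2 * (t ^ 2 - 1) ^ 2) := by
    simp only [negY, hW, E24spec]
    intro h; apply hy2ne; linarith
  have hslope2 : W.slope 2 2 (2 * (t ^ 2 - 1) ^ 2) (2 * (t ^ 2 - 1) ^ 2) = 2 := by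
    rw [slope_of_Y_ne rfl hy2']
    simp only [negY, hW, E24spec]
    rw [div_eq_iff (by intro h; apply hy2ne; linarith)]
    ring
  have hx4 : W.addX 2 2 (2 : ℚ) = 1 + 2 * t ^ 2 - t ^ 4 := by
    simp only [addX, hW, E24spec]; ring
  have hy4 : W.addY 2 2 (2 * (t ^ 2 - 1) ^ 2) (2 : ℚ) = 0 := by
    simp only [addY, negAddY, negY, addX, hW, E24spec]; ring
  have h4 : W.Nonsingular (1 + 2 * t ^ 2 - t ^ 4) 0 := by
    have := nonsingular_add h2 h2 fun hxy => hy2' hxy.right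
    rwa [hslope2, hx4, hy4] at this
  have hQ4 : Point.some _ _ h2 + Point.some _ _ h2 = Point.some _ _ h4 := by
    rw [Point.add_self_of_Y_ne hy2']
    exact some_congr (by rw [hslope2, hx4]) (by rw [hslope2, hy4]) _ _
  have hy4' : (0 : ℚ) = W.negY (1 + 2 * t ^ 2 - t ^ 4) 0 := by
    simp only [negY, hW, E24spec]; ring
  have hQ8 : Point.some _ _ h4 + Point.some _ _ h4 = 0 := Point.add_self_of_Y_eq hy4'
  refine ⟨h1, ?_⟩
  have h2P : 2 • Point.some _ _ h1 = Point.some _ _ h2 := by rw [two_nsmul, hQ2]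
  have h4P : 4 • Point.some _ _ h1 = Point.some _ _ h4 := by
    have : (4 : ℕ) • Point.some _ _ h1 = 2 • (2 • Point.some _ _ h1) := by
      rw [← mul_nsmul]
    rw [this, h2P, two_nsmul, hQ4]
  have h8P : 8 • Point.some _ _ h1 = 0 := by
    have : (8 : ℕ) • Point.some _ _ h1 = 2 • (4 • Point.some _ _ h1) := by
      rw [← mul_nsmul]
    rw [this, h4P, two_nsmul, hQ8]
  haveI : Fact (Nat.Prime 2) := ⟨Nat.prime_two⟩
  have := addOrderOf_eq_prime_pow (x := Point.some _ _ h1) (p := 2) (n := 2)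
    (by rw [show (2:ℕ)^2 = 4 from rfl, h4P]; exact Point.some_ne_zero h4)
    (by rw [show (2:ℕ)^(2+1) = 8 from rfl]; exact h8P)
  simpa using this
end

section
/- The discriminant of the Weierstrass equation E_222(a): y^2 = x^3 + (16a + 942/13)x^2 + (10048a/13 + 293084/169)x + (1024a^2 + 1620800a/169 + 30250696/2197), as a polynomial in a, equals a nonzero rational constant times (4a+1)^2 (256a^3 + 368a^2 + 104a + 23). -/
open WeierstrassCurve

/-- The specialization `E_222(a)` for `a : ℚ`. -/
def E222spec (a : ℚ) : WeierstrassCurve.Affine ℚ :=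
  { a₁ := 0, a₃ := 0,
    a₂ := 16 * a + 942 / 13,
    a₄ := 10048 / 13 * a + 293084 / 169,
    a₆ := 1024 * a ^ 2 + 1620800 / 169 * a + 30250696 / 2197 }

/-- The discriminant of `E_222(a)`, as a polynomial in `a`, equals a nonzero rational
constant times `(4a+1)²(256a³ + 368a² + 104a + 23)`. -/
theorem stmt_13 :
    ∃ k : ℚ, k ≠ 0 ∧ ∀ a : ℚ,
      (E222spec a).Δ = k * ((4 * a + 1) ^ 2 * (256 * a ^ 3 + 368 * a ^ 2 + 104 * a + 23)) := by
  refine ⟨-65536, by norm_num, fun a => ?_⟩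
  simp only [E222spec, WeierstrassCurve.Δ, WeierstrassCurve.b₂, WeierstrassCurve.b₄,
    WeierstrassCurve.b₆, WeierstrassCurve.b₈]
  ring
end

section
/- The pair (c, a) = (-24361/14400, -42/25) admits a full 246 pre-image arrangement over ℚ: there exist rational numbers t, s_1, s_2, q_1, q_2, q_3 such that t^2 + c = a, s_1^2 + c = t, s_2^2 + c = -t, q_1^2 + c = s_1, q_2^2 + c = -s_1, q_3^2 + c = s_2, with t, s_1, s_2, q_1, q_2, q_3 all nonzero (giving 2 rational first, 4 rational second, and 6 rational third pre-images of a under f_c(x) = x^2 + c). -/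
/-- The pair `(c, a) = (-24361/14400, -42/25)` admits a full 246 pre-image arrangement
over ℚ. -/
theorem stmt_15 :
    ∃ t s₁ s₂ q₁ q₂ q₃ : ℚ,
      t ≠ 0 ∧ s₁ ≠ 0 ∧ s₂ ≠ 0 ∧ q₁ ≠ 0 ∧ q₂ ≠ 0 ∧ q₃ ≠ 0 ∧
      t ^ 2 + (-24361 / 14400 : ℚ) = -42 / 25 ∧
      s₁ ^ 2 + (-24361 / 14400 : ℚ) = t ∧
      s₂ ^ 2 + (-24361 / 14400 : ℚ) = -t ∧
      q₁ ^ 2 + (-24361 / 14400 : ℚ) = s₁ ∧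
      q₂ ^ 2 + (-24361 / 14400 : ℚ) = -s₁ ∧
      q₃ ^ 2 + (-24361 / 14400 : ℚ) = s₂ := by
  exact ⟨13/120, 161/120, -151/120, 209/120, 71/120, 79/120,
    by norm_num, by norm_num, by norm_num, by norm_num, by norm_num, by norm_num,
    by norm_num, by norm_num, by norm_num, by norm_num, by norm_num, by norm_num⟩
end
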